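/- Let N : ℤ → ℤ → ℚ be a function with N p q = 0 whenever p ≤ 0 or q ≤ 0. Define formal Laurent series (in x, with coefficients polynomials in t) ϑ_q = x^{-q} + ∑_{p≥1} p·N(p,q)·t^{p+q}·x^p for each q ≥ 1, and ϑ_0 = 1. Suppose that for all p,q ≥ 1 the multiplication rule ϑ_p · ϑ_q = ϑ_{p+q} + ∑_{r=0}^{max(p,q)-1} ((p-r)·N(p-r,q) + (q-r)·N(q-r,p))·t^{p+q-r}·ϑ_r holds. Then comparing the coefficient of t^3·x on both sides of ϑ_1·ϑ_1 = ϑ_2 + α ϑ_0 yields N(1,2) = 4·N(2,1). -/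

import Mathlib

/-- The theta function `ϑ_q = x^{-q} + ∑_{p≥1} p·N(p,q)·t^{p+q}·x^p`, as a formal Laurent
series in `x` (a Hahn series over `ℤ`) with coefficients polynomials in `t`. -/
noncomputable def theta (N : ℤ → ℤ → ℚ) (q : ℕ) : HahnSeries ℤ (Polynomial ℚ) :=
  HahnSeries.single (-(q : ℤ)) 1 +
    HahnSeries.ofPowerSeries ℤ (Polynomial ℚ)
      (PowerSeries.mk fun p =>
        if p = 0 then 0 else Polynomial.monomial (p + q) ((p : ℚ) * N p q))

lemma single_mul_coeff' {x : HahnSeries ℤ (Polynomial ℚ)} {a b c : ℤ} (h : c = a + b) :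
    (HahnSeries.single b (1 : Polynomial ℚ) * x).coeff c = x.coeff a := by
  rw [h, HahnSeries.coeff_single_mul_add, one_mul]

lemma mul_single_coeff' {x : HahnSeries ℤ (Polynomial ℚ)} {a b c : ℤ} (h : c = a + b) :
    (x * HahnSeries.single b (1 : Polynomial ℚ)).coeff c = x.coeff a := by
  rw [h, HahnSeries.coeff_mul_single_add, mul_one]

lemma theta_coeff_nat (N : ℤ → ℤ → ℚ) (q : ℕ) (n : ℕ) (hn : n ≠ 0) :
    (theta N q).coeff (n : ℤ) = Polynomial.monomial (n + q) ((n : ℚ) * N n q) := by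
  have h1 : (n : ℤ) ≠ -(q : ℤ) := by omega
  rw [theta, HahnSeries.coeff_add, HahnSeries.coeff_single_of_ne h1,
    HahnSeries.ofPowerSeries_apply_coeff, PowerSeries.coeff_mk, if_neg hn, zero_add]

lemma theta_mul_coeff_one (N : ℤ → ℤ → ℚ) :
    (theta N 1 * theta N 1).coeff 1 =
      Polynomial.monomial 3 ((2 : ℚ) * N 2 1) + Polynomial.monomial 3 ((2 : ℚ) * N 2 1) := by
  rw [theta]
  set B := HahnSeries.ofPowerSeries ℤ (Polynomial ℚ)
    (PowerSeries.mk fun p : ℕ =>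
      if p = 0 then 0 else Polynomial.monomial (p + 1) ((p : ℚ) * N p 1)) with hBdef
  push_cast
  rw [add_mul, mul_add, mul_add, HahnSeries.coeff_add, HahnSeries.coeff_add,
    HahnSeries.coeff_add, HahnSeries.single_mul_single,
    HahnSeries.coeff_single_of_ne (by norm_num : (1 : ℤ) ≠ -1 + -1),
    single_mul_coeff' (by norm_num : (1:ℤ) = 2 + -1),
    mul_single_coeff' (by norm_num : (1:ℤ) = 2 + -1)]
  have hBB : (B * B).coeff (1 : ℤ) = 0 := by
    have h1 : ((1 : ℕ) : ℤ) = (1 : ℤ) := by norm_num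
    rw [hBdef, ← map_mul, ← h1, HahnSeries.ofPowerSeries_apply_coeff,
      PowerSeries.coeff_mul]
    rw [Finset.Nat.sum_antidiagonal_eq_sum_range_succ_mk]
    simp [Finset.sum_range_succ]
  have hB2 : B.coeff (2 : ℤ) = Polynomial.monomial 3 ((2 : ℚ) * N 2 1) := by
    have h1 : ((2 : ℕ) : ℤ) = (2 : ℤ) := by norm_num
    rw [hBdef, ← h1, HahnSeries.ofPowerSeries_apply_coeff, PowerSeries.coeff_mk]
    norm_num
  rw [hBB, hB2]
  ring

theorem theta_mul_relation_N12
    (N : ℤ → ℤ → ℚ)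
    (hvanish : ∀ p q : ℤ, p ≤ 0 ∨ q ≤ 0 → N p q = 0)
    (hmul : ∀ p q : ℕ, 1 ≤ p → 1 ≤ q →
      theta N p * theta N q = theta N (p + q) +
        ∑ r ∈ Finset.range (max p q),
          HahnSeries.single (0 : ℤ)
            (Polynomial.monomial (p + q - r)
              (((p : ℚ) - r) * N ((p : ℤ) - r) q + ((q : ℚ) - r) * N ((q : ℤ) - r) p)) *
            theta N r) :
    N 1 2 = 4 * N 2 1 := by
  have H := hmul 1 1 le_rfl le_rfl
  have H1 := congrArg (fun f : HahnSeries ℤ (Polynomial ℚ) => f.coeff 1) H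
  rw [theta_mul_coeff_one N] at H1
  -- RHS
  have h2 : (theta N (1 + 1)).coeff 1 = Polynomial.monomial 3 (N 1 2) := by
    have := theta_coeff_nat N 2 1 (by norm_num)
    norm_num at this ⊢
    rw [this]
  have h0 : (theta N 0).coeff 1 = 0 := by
    have := theta_coeff_nat N 0 1 (by norm_num)
    norm_num at this ⊢
    rw [this, hvanish 1 0 (Or.inr le_rfl), map_zero]
  simp only [max_self] at H1
  rw [HahnSeries.coeff_add, h2, Finset.sum_range_one,
    HahnSeries.coeff_single_zero_mul, h0, mul_zero, add_zero] at H1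
  have H3 := congrArg (fun p : Polynomial ℚ => p.coeff 3) H1
  simp [Polynomial.coeff_monomial] at H3
  linarith
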